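/- Among all configurations y of the 2-dimensional Ising model with fixed sufficient statistics T_1(y) = a and T_2(y) = b, the maximal possible number of singleton components is s = ⌊(b/2 − 1 − √(4a − b + 1))/2⌋. -/
import Mathlib


open Finset

def nbrs (v : ℤ × ℤ) : Finset (ℤ × ℤ) :=
  {(v.1 + 1, v.2), (v.1 - 1, v.2), (v.1, v.2 + 1), (v.1, v.2 - 1)}

/-- `T2` of a finite configuration in the grid `ℤ²`. -/
def T2 (A : Finset (ℤ × ℤ)) : ℕ :=
  ∑ v ∈ A, ((nbrs v).filter (fun w => w ∉ A)).card

/-- Number of singleton components of a configuration: cells with no grid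
neighbor in the configuration. -/
def numSingletons (A : Finset (ℤ × ℤ)) : ℕ :=
  (A.filter (fun v => ∀ w ∈ nbrs v, w ∉ A)).card

lemma mem_nbrs {w v : ℤ × ℤ} : w ∈ nbrs v ↔
    w = (v.1 + 1, v.2) ∨ w = (v.1 - 1, v.2) ∨ w = (v.1, v.2 + 1) ∨ w = (v.1, v.2 - 1) := by
  simp [nbrs]

lemma nbrs_symm {v w : ℤ × ℤ} (h : w ∈ nbrs v) : v ∈ nbrs w := by
  rcases v with ⟨x, y⟩; rcases w with ⟨p, q⟩
  simp only [mem_nbrs, Prod.mk.injEq] at h ⊢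
  omega

lemma card_filter_nbrs (P : ℤ × ℤ → Prop) [DecidablePred P] (v : ℤ × ℤ) :
    ((nbrs v).filter P).card =
      (if P (v.1 + 1, v.2) then 1 else 0) + (if P (v.1 - 1, v.2) then 1 else 0)
      + (if P (v.1, v.2 + 1) then 1 else 0) + (if P (v.1, v.2 - 1) then 1 else 0) := by
  rcases v with ⟨x, y⟩
  rw [Finset.card_filter]
  show ∑ w ∈ ({(x+1,y), (x-1,y), (x,y+1), (x,y-1)} : Finset (ℤ × ℤ)), _ = _
  rw [Finset.sum_insert (by simp [Prod.ext_iff]; try omega),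
      Finset.sum_insert (by simp [Prod.ext_iff]; try omega),
      Finset.sum_insert (by simp [Prod.ext_iff]; try omega),
      Finset.sum_singleton]
  ring

lemma card_nbrs (v : ℤ × ℤ) : (nbrs v).card = 4 := by
  have := card_filter_nbrs (fun _ => True) v
  simpa using this

lemma T2_plus (A : Finset (ℤ × ℤ)) :
    T2 A + ((A.filter fun v => (v.1 + 1, v.2) ∈ A).card
      + (A.filter fun v => (v.1 - 1, v.2) ∈ A).card
      + (A.filter fun v => (v.1, v.2 + 1) ∈ A).card
      + (A.filter fun v => (v.1, v.2 - 1) ∈ A).card) = 4 * A.card := by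
  unfold T2
  rw [Finset.card_filter, Finset.card_filter, Finset.card_filter, Finset.card_filter,
    ← Finset.sum_add_distrib, ← Finset.sum_add_distrib, ← Finset.sum_add_distrib,
    ← Finset.sum_add_distrib]
  rw [Finset.sum_congr rfl (g := fun _ => 4) (fun v _ => by
    rw [card_filter_nbrs]
    by_cases h1 : (v.1 + 1, v.2) ∈ A <;> by_cases h2 : (v.1 - 1, v.2) ∈ A <;>
      by_cases h3 : (v.1, v.2 + 1) ∈ A <;> by_cases h4 : (v.1, v.2 - 1) ∈ A <;>
      simp [h1, h2, h3, h4])]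
  rw [Finset.sum_const, smul_eq_mul, mul_comm]

lemma dir_bound (B : Finset (ℤ × ℤ)) (π o : ℤ × ℤ → ℤ) (τ : ℤ × ℤ → ℤ × ℤ)
    (hπ : ∀ v, π (τ v) = π v) (ho : ∀ v, o v < o (τ v)) :
    (B.filter (fun v => τ v ∈ B)).card + (B.image π).card ≤ B.card := by
  have hsplit : (B.filter (fun v => τ v ∈ B)).card
      + (B.filter (fun v => ¬ τ v ∈ B)).card = B.card :=
    Finset.card_filter_add_card_filter_not (p := fun v => τ v ∈ B)
  have h2 : (B.image π).card ≤ (B.filter (fun v => ¬ τ v ∈ B)).card := by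
    apply Finset.card_le_card_of_surjOn π
    intro y hy
    simp only [coe_image, Set.mem_image, mem_coe] at hy
    obtain ⟨v, hv, rfl⟩ := hy
    have hne : (B.filter (fun w => π w = π v)).Nonempty := ⟨v, by simp [hv]⟩
    obtain ⟨u, hu, hmax⟩ := Finset.exists_max_image _ o hne
    simp only [mem_filter] at hu
    refine ⟨u, ?_, hu.2⟩
    simp only [coe_filter, Set.mem_setOf_eq]
    refine ⟨hu.1, fun hτ => ?_⟩
    have h3 := hmax (τ u) (by simp [mem_filter, hτ, hπ, hu.2])
    have h4 := ho u
    omega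
  omega

-- the filter counting cells with a neighbour in direction τ is unchanged when
-- removing singletons
lemma filter_dir_eq (A : Finset (ℤ × ℤ)) (τ : ℤ × ℤ → ℤ × ℤ)
    (hτ : ∀ v, τ v ∈ nbrs v) :
    A.filter (fun v => τ v ∈ A) =
      (A \ A.filter (fun v => ∀ w ∈ nbrs v, w ∉ A)).filter
        (fun v => τ v ∈ A \ A.filter (fun v => ∀ w ∈ nbrs v, w ∉ A)) := by
  ext u
  simp only [mem_filter, mem_sdiff]
  constructor
  · rintro ⟨hu, hτu⟩
    exact ⟨⟨hu, fun hc => hc.2 (τ u) (hτ u) hτu⟩, ⟨hτu, fun hc => hc.2 u (nbrs_symm (hτ u)) hu⟩⟩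
  · rintro ⟨⟨hu, _⟩, hτu, _⟩
    exact ⟨hu, hτu⟩

lemma alg_upper (aR bR mR sR x σ : ℝ) (hb4a : bR + 1 ≤ 4 * aR) (hms : mR + sR = aR)
    (hx0 : 0 ≤ x) (hx2 : x ^ 2 = mR) (hσ0 : 0 ≤ σ) (hσ2 : σ ^ 2 = 4 * aR - bR + 1)
    (main : mR - x ≥ (4 * aR - bR) / 4) :
    sR ≤ (bR / 2 - 1 - σ) / 2 := by
  have step1 : 1 + σ ≤ 2 * x := by
    rcases le_or_gt 1 (2 * x) with hc | hc
    · nlinarith [sq_nonneg (2 * x - 1 - σ)]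
    · nlinarith [sq_nonneg x]
  have hsq : (1 + σ) ^ 2 ≤ (2 * x) ^ 2 := by
    have h1 : (0:ℝ) ≤ 1 + σ := by linarith
    exact pow_le_pow_left₀ h1 step1 2
  nlinarith [hsq]

lemma upper_bound (a b : ℕ) (hab : (b : ℤ) < 4 * (a : ℤ)) (A : Finset (ℤ × ℤ))
    (hcard : A.card = a) (hT2 : T2 A = b) :
    (numSingletons A : ℤ) ≤
      ⌊((b : ℝ) / 2 - 1 - Real.sqrt (4 * (a : ℝ) - (b : ℝ) + 1)) / 2⌋ := by
  classical
  set B := A \ A.filter (fun v => ∀ w ∈ nbrs v, w ∉ A) with hB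
  set s := numSingletons A with hs
  set m := B.card with hm
  set ρ := (B.image Prod.snd).card with hρ
  set γ := (B.image Prod.fst).card with hγ
  have hsle : (A.filter (fun v => ∀ w ∈ nbrs v, w ∉ A)).card ≤ A.card :=
    Finset.card_filter_le _ _
  have hms : m + s = a := by
    rw [hm, hB, Finset.card_sdiff_of_subset (Finset.filter_subset _ _)]
    rw [← hcard]
    have : s = (A.filter (fun v => ∀ w ∈ nbrs v, w ∉ A)).card := rfl
    omega
  -- four directional bounds
  have hτR : ∀ v : ℤ × ℤ, ((v.1 + 1, v.2) : ℤ × ℤ) ∈ nbrs v := fun v => by simp [mem_nbrs]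
  have hτL : ∀ v : ℤ × ℤ, ((v.1 - 1, v.2) : ℤ × ℤ) ∈ nbrs v := fun v => by simp [mem_nbrs]
  have hτU : ∀ v : ℤ × ℤ, ((v.1, v.2 + 1) : ℤ × ℤ) ∈ nbrs v := fun v => by simp [mem_nbrs]
  have hτD : ∀ v : ℤ × ℤ, ((v.1, v.2 - 1) : ℤ × ℤ) ∈ nbrs v := fun v => by simp [mem_nbrs]
  have hcR : (A.filter fun v => (v.1 + 1, v.2) ∈ A).card + ρ ≤ m := by
    rw [filter_dir_eq A _ hτR]
    exact dir_bound B Prod.snd Prod.fst _ (fun v => rfl) (fun v => by simp)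
  have hcL : (A.filter fun v => (v.1 - 1, v.2) ∈ A).card + ρ ≤ m := by
    rw [filter_dir_eq A _ hτL]
    exact dir_bound B Prod.snd (fun v => -v.1) _ (fun v => rfl) (fun v => by simp)
  have hcU : (A.filter fun v => (v.1, v.2 + 1) ∈ A).card + γ ≤ m := by
    rw [filter_dir_eq A _ hτU]
    exact dir_bound B Prod.fst Prod.snd _ (fun v => rfl) (fun v => by simp)
  have hcD : (A.filter fun v => (v.1, v.2 - 1) ∈ A).card + γ ≤ m := by
    rw [filter_dir_eq A _ hτD]
    exact dir_bound B Prod.fst (fun v => -v.2) _ (fun v => rfl) (fun v => by simp)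
  have hplus := T2_plus A
  rw [hT2, hcard] at hplus
  have hkey : 4 * a + 2 * ρ + 2 * γ ≤ b + 4 * m := by omega
  have hsub : B ⊆ (B.image Prod.fst) ×ˢ (B.image Prod.snd) := by
    intro v hv
    rw [Finset.mem_product]
    exact ⟨Finset.mem_image_of_mem _ hv, Finset.mem_image_of_mem _ hv⟩
  have hmγρ : m ≤ γ * ρ := by
    have := Finset.card_le_card hsub
    rwa [Finset.card_product] at this
  -- move to the reals
  have hb4a : (b : ℝ) + 1 ≤ 4 * a := by exact_mod_cast hab
  have hkeyR : 4 * (a : ℝ) + 2 * ρ + 2 * γ ≤ b + 4 * m := by exact_mod_cast hkey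
  have hmγρR : (m : ℝ) ≤ γ * ρ := by exact_mod_cast hmγρ
  have hρ0 : (0:ℝ) ≤ ρ := by positivity
  have hγ0 : (0:ℝ) ≤ γ := by positivity
  have sqm : Real.sqrt m ≤ ((ρ:ℝ) + γ) / 2 := by
    rw [Real.sqrt_le_iff]
    constructor <;> nlinarith [sq_nonneg ((ρ:ℝ) - γ), hmγρR, hρ0, hγ0]
  have hx0 : (0:ℝ) ≤ Real.sqrt m := Real.sqrt_nonneg _
  have hx2 : Real.sqrt m ^ 2 = (m:ℝ) := Real.sq_sqrt (by positivity)
  have main : (m : ℝ) - Real.sqrt m ≥ (4 * a - b) / 4 := by linarith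
  have hmsR : (m:ℝ) + s = a := by exact_mod_cast hms
  have hfin : (s : ℝ) ≤ ((b:ℝ) / 2 - 1 - Real.sqrt (4 * (a:ℝ) - b + 1)) / 2 :=
    alg_upper a b m s (Real.sqrt m) (Real.sqrt (4 * (a:ℝ) - b + 1)) hb4a hmsR hx0 hx2
      (Real.sqrt_nonneg _) (Real.sq_sqrt (by linarith)) main
  rw [Int.le_floor]
  push_cast
  exact hfin

def col (x : ℤ) (n : ℕ) : Finset (ℤ × ℤ) := (Finset.range n).image (fun y : ℕ => ((x, (y : ℤ)) : ℤ × ℤ))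

def shape (w : ℕ) (f : ℕ → ℕ) : Finset (ℤ × ℤ) :=
  (Finset.range w).biUnion (fun x => col (x : ℤ) (f x))

def sings (s : ℕ) : Finset (ℤ × ℤ) := (Finset.range s).image (fun i : ℕ => ((2 * (i : ℤ), -5) : ℤ × ℤ))

lemma mem_col {p q : ℤ} {x : ℤ} {n : ℕ} : (p, q) ∈ col x n ↔ p = x ∧ 0 ≤ q ∧ q < n := by
  simp only [col, Finset.mem_image, Finset.mem_range, Prod.mk.injEq]
  constructor
  · rintro ⟨y, hy, rfl, rfl⟩
    refine ⟨rfl, by omega, by exact_mod_cast hy⟩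
  · rintro ⟨rfl, hq0, hqn⟩
    exact ⟨q.toNat, by omega, rfl, by omega⟩

lemma mem_shape {p q : ℤ} {w : ℕ} {f : ℕ → ℕ} :
    (p, q) ∈ shape w f ↔ 0 ≤ p ∧ p < w ∧ 0 ≤ q ∧ q < f p.toNat := by
  simp only [shape, Finset.mem_biUnion, Finset.mem_range]
  constructor
  · rintro ⟨x, hx, hc⟩
    rw [mem_col] at hc
    obtain ⟨rfl, h1, h2⟩ := hc
    refine ⟨by omega, by exact_mod_cast hx, h1, by simpa using h2⟩
  · rintro ⟨h0, hw, h1, h2⟩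
    exact ⟨p.toNat, by omega, by rw [mem_col]; omega⟩

lemma card_col (x : ℤ) (n : ℕ) : (col x n).card = n := by
  rw [col, Finset.card_image_of_injective _ (fun y z h => by
    simpa using congrArg Prod.snd h), Finset.card_range]

lemma card_shape (w : ℕ) (f : ℕ → ℕ) : (shape w f).card = ∑ x ∈ Finset.range w, f x := by
  rw [shape, Finset.card_biUnion]
  · exact Finset.sum_congr rfl (fun x _ => card_col _ _)
  · intro x hx y hy hxy
    simp only [Finset.disjoint_left]
    rintro ⟨p, q⟩ hp hq
    rw [mem_col] at hp hq
    omega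

lemma card_sings (s : ℕ) : (sings s).card = s := by
  rw [sings, Finset.card_image_of_injective _ (fun y z h => by
    have := congrArg Prod.fst h; simp at this; omega), Finset.card_range]

lemma mem_sings {p q : ℤ} {s : ℕ} : (p, q) ∈ sings s ↔ ∃ i : ℕ, i < s ∧ p = 2 * i ∧ q = -5 := by
  simp only [sings, Finset.mem_image, Finset.mem_range, Prod.mk.injEq]
  constructor
  · rintro ⟨i, hi, rfl, rfl⟩; exact ⟨i, hi, rfl, rfl⟩
  · rintro ⟨i, hi, rfl, rfl⟩; exact ⟨i, hi, rfl, rfl⟩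

lemma sum_ind (n : ℕ) (P : ℕ → Prop) [DecidablePred P] :
    ∑ y ∈ Finset.range n, (if P y then 1 else 0) = ((Finset.range n).filter P).card :=
  (Finset.card_filter _ _).symm

lemma sum_ind_last (n : ℕ) (hn : 1 ≤ n) :
    ∑ y ∈ Finset.range n, (if y + 1 = n then 1 else 0) = 1 := by
  rw [sum_ind]
  have : (Finset.range n).filter (fun y => y + 1 = n) = {n - 1} := by
    ext y; simp only [Finset.mem_filter, Finset.mem_range, Finset.mem_singleton]; omega
  rw [this, Finset.card_singleton]

lemma sum_ind_zero (n : ℕ) (hn : 1 ≤ n) :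
    ∑ y ∈ Finset.range n, (if y = 0 then 1 else 0) = 1 := by
  rw [sum_ind]
  have : (Finset.range n).filter (fun y => y = 0) = {0} := by
    ext y; simp only [Finset.mem_filter, Finset.mem_range, Finset.mem_singleton]; omega
  rw [this, Finset.card_singleton]

lemma sum_ind_ge (n k : ℕ) :
    ∑ y ∈ Finset.range n, (if k ≤ y then 1 else 0) = n - k := by
  rw [sum_ind]
  have : (Finset.range n).filter (fun y => k ≤ y) = Finset.Ico k n := by
    ext y; simp only [Finset.mem_filter, Finset.mem_range, Finset.mem_Ico]; omega
  rw [this, Nat.card_Ico]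

lemma tel0 (f : ℕ → ℕ) (hA : ∀ x y : ℕ, x ≤ y → f y ≤ f x) (k : ℕ) :
    ∑ x ∈ Finset.range k, (f x - f (x + 1)) = f 0 - f k := by
  induction k with
  | zero => simp
  | succ k ih =>
    rw [Finset.sum_range_succ, ih]
    have h1 := hA k (k + 1) (by omega)
    have h2 := hA 0 k (by omega)
    omega

lemma T2_shape (w : ℕ) (f : ℕ → ℕ) (hw : 1 ≤ w) (hA : ∀ x y : ℕ, x ≤ y → f y ≤ f x)
    (hpos : ∀ x, x < w → 1 ≤ f x) :
    T2 (shape w f) = 2 * w + 2 * f 0 := by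
  classical
  have hdis : Set.PairwiseDisjoint ↑(Finset.range w) (fun x : ℕ => col (x : ℤ) (f x)) := by
    intro x _ y _ hxy
    simp only [Function.onFun, Finset.disjoint_left]
    rintro ⟨p, q⟩ hp hq
    simp only [col, Finset.mem_image] at hp hq
    obtain ⟨y1, _, h1⟩ := hp; obtain ⟨y2, _, h2⟩ := hq
    apply hxy
    have := congrArg Prod.fst h1; have := congrArg Prod.fst h2
    simp_all
    omega
  have hinner : ∀ x ∈ Finset.range w,
      (∑ v ∈ col (x : ℤ) (f x), ((nbrs v).filter (fun u => u ∉ shape w f)).card)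
      = (f x - (if x + 1 < w then f (x + 1) else 0)) + (if x = 0 then f x else 0) + 2 := by
    intro x hx
    rw [Finset.mem_range] at hx
    rw [col, Finset.sum_image (by intro y1 _ y2 _ h; simpa using congrArg Prod.snd h)]
    have hstep : ∀ y ∈ Finset.range (f x),
        ((nbrs ((x : ℤ), (y : ℤ))).filter (fun u => u ∉ shape w f)).card
        = ((if (if x + 1 < w then f (x + 1) else 0) ≤ y then 1 else 0)
            + (if x = 0 then 1 else 0))
          + ((if y + 1 = f x then 1 else 0) + (if y = 0 then 1 else 0)) := by
      intro y hy
      rw [Finset.mem_range] at hy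
      rw [card_filter_nbrs]
      have e1 : (((x : ℤ) + 1, (y : ℤ)) ∉ shape w f) ↔ ((if x + 1 < w then f (x + 1) else 0) ≤ y) := by
        have hco : ((x : ℤ) + 1).toNat = x + 1 := by omega
        rw [show ((x : ℤ) + 1, (y : ℤ)) = (((x : ℤ) + 1), (y : ℤ)) from rfl, mem_shape, hco]
        by_cases hc : x + 1 < w <;> simp [hc] <;> omega
      have e2 : (((x : ℤ) - 1, (y : ℤ)) ∉ shape w f) ↔ (x = 0) := by
        rw [mem_shape]
        constructor
        · intro h
          by_contra hx0
          apply h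
          have hco : ((x : ℤ) - 1).toNat = x - 1 := by omega
          rw [hco]
          have := hA (x - 1) x (by omega)
          refine ⟨by omega, by omega, by omega, by omega⟩
        · rintro rfl
          intro h
          omega
      have e3 : (((x : ℤ), (y : ℤ) + 1) ∉ shape w f) ↔ (y + 1 = f x) := by
        have hco : ((x : ℤ)).toNat = x := by omega
        rw [mem_shape, hco]
        constructor
        · intro h; by_contra hc; exact h ⟨by omega, by omega, by omega, by omega⟩
        · intro h hc; omega
      have e4 : (((x : ℤ), (y : ℤ) - 1) ∉ shape w f) ↔ (y = 0) := by
        have hco : ((x : ℤ)).toNat = x := by omega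
        rw [mem_shape, hco]
        constructor
        · intro h; by_contra hc; exact h ⟨by omega, by omega, by omega, by omega⟩
        · intro h hc; omega
      simp only [show ((x : ℤ), (y : ℤ)).1 = (x : ℤ) from rfl,
        show ((x : ℤ), (y : ℤ)).2 = (y : ℤ) from rfl]
      rw [if_congr e1 rfl rfl, if_congr e2 rfl rfl, if_congr e3 rfl rfl, if_congr e4 rfl rfl]
      ring
    rw [Finset.sum_congr rfl hstep]
    rw [Finset.sum_add_distrib, Finset.sum_add_distrib, Finset.sum_add_distrib]
    rw [sum_ind_ge, sum_ind_last _ (hpos x hx), sum_ind_zero _ (hpos x hx)]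
    have : ∑ y ∈ Finset.range (f x), (if x = 0 then 1 else 0)
        = (if x = 0 then f x else 0) := by
      by_cases hc : x = 0 <;> simp [hc]
    rw [this]
  have hT : T2 (shape w f) = ∑ x ∈ Finset.range w,
      ∑ v ∈ col (x : ℤ) (f x), ((nbrs v).filter (fun u => u ∉ shape w f)).card := by
    rw [T2]
    exact Finset.sum_biUnion hdis
  rw [hT]
  rw [Finset.sum_congr rfl hinner]
  rw [Finset.sum_add_distrib, Finset.sum_add_distrib]
  have t1 : ∑ x ∈ Finset.range w, (f x - (if x + 1 < w then f (x + 1) else 0)) = f 0 := by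
    obtain ⟨k, rfl⟩ : ∃ k, w = k + 1 := ⟨w - 1, by omega⟩
    rw [Finset.sum_range_succ]
    have : ∀ x ∈ Finset.range k, (f x - (if x + 1 < k + 1 then f (x + 1) else 0))
        = f x - f (x + 1) := by
      intro x hx
      rw [Finset.mem_range] at hx
      rw [if_pos (by omega)]
    rw [Finset.sum_congr rfl this, tel0 f hA, if_neg (by omega)]
    have := hA 0 k (by omega)
    omega
  have t2 : ∑ x ∈ Finset.range w, (if x = 0 then f x else 0) = f 0 := by
    rw [Finset.sum_ite_eq' (Finset.range w) 0 f]
    rw [if_pos (Finset.mem_range.mpr (by omega))]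
  rw [t1, t2, Finset.sum_const, Finset.card_range, smul_eq_mul]
  ring

lemma nbr_shape_coords {w : ℕ} {f : ℕ → ℕ} {u v : ℤ × ℤ} (hu : u ∈ shape w f)
    (hv : v ∈ nbrs u) : -1 ≤ v.2 := by
  rcases u with ⟨p, q⟩
  have h := mem_shape.mp hu
  rcases mem_nbrs.mp hv with h' | h' | h' | h' <;> subst h' <;> simp <;> omega

lemma sep_shape_sings {w : ℕ} {f : ℕ → ℕ} {s : ℕ} :
    ∀ u ∈ shape w f, ∀ v ∈ nbrs u, v ∉ sings s := by
  intro u hu v hv hvs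
  have h2 := nbr_shape_coords hu hv
  rcases v with ⟨p, q⟩
  obtain ⟨i, _, _, h5⟩ := mem_sings.mp hvs
  simp at h2
  omega

lemma sep_sings_all {s : ℕ} {w : ℕ} {f : ℕ → ℕ} :
    ∀ u ∈ sings s, ∀ v ∈ nbrs u, v ∉ shape w f ∧ v ∉ sings s := by
  rintro ⟨p, q⟩ hu v hv
  obtain ⟨i, hi, rfl, rfl⟩ := mem_sings.mp hu
  rcases mem_nbrs.mp hv with h' | h' | h' | h' <;> subst h' <;>
    constructor <;> simp only [mem_shape, mem_sings] <;>
    first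
    | (rintro ⟨j, _, hj1, hj2⟩; omega)
    | (rintro ⟨_, _, _, _⟩; omega)
  all_goals (rintro ⟨j, _, hj1, hj2⟩; omega)

lemma disj_shape_sings {w : ℕ} {f : ℕ → ℕ} {s : ℕ} : Disjoint (shape w f) (sings s) := by
  rw [Finset.disjoint_left]
  rintro ⟨p, q⟩ hp hq
  have h1 := mem_shape.mp hp
  obtain ⟨i, _, _, _⟩ := mem_sings.mp hq
  omega

lemma T2_union (A B : Finset (ℤ × ℤ)) (hAB : ∀ u ∈ A, ∀ v ∈ nbrs u, v ∉ B)
    (hBA : ∀ u ∈ B, ∀ v ∈ nbrs u, v ∉ A) (hd : Disjoint A B) :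
    T2 (A ∪ B) = T2 A + T2 B := by
  classical
  rw [T2, Finset.sum_union hd, T2, T2]
  congr 1
  · apply Finset.sum_congr rfl
    intro v hv
    congr 1
    apply Finset.filter_congr
    intro u hu
    simp only [Finset.mem_union]
    have := hAB v hv u hu
    tauto
  · apply Finset.sum_congr rfl
    intro v hv
    congr 1
    apply Finset.filter_congr
    intro u hu
    simp only [Finset.mem_union]
    have := hBA v hv u hu
    tauto

lemma T2_sings (s : ℕ) : T2 (sings s) = 4 * s := by
  classical
  rw [T2]
  have h : ∀ v ∈ sings s, ((nbrs v).filter (fun w => w ∉ sings s)).card = 4 := by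
    intro v hv
    have : (nbrs v).filter (fun w => w ∉ sings s) = nbrs v := by
      apply Finset.filter_true_of_mem
      intro u hu
      exact (sep_sings_all (w := 0) (f := fun _ => 0) v hv u hu).2
    rw [this, card_nbrs]
  rw [Finset.sum_congr rfl h, Finset.sum_const, card_sings, smul_eq_mul, mul_comm]

lemma shape_no_single {w : ℕ} {f : ℕ → ℕ} (hA : ∀ x y : ℕ, x ≤ y → f y ≤ f x)
    (hf0 : 2 ≤ f 0) :
    ∀ u ∈ shape w f, ∃ v ∈ nbrs u, v ∈ shape w f := by
  rintro ⟨p, q⟩ hu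
  obtain ⟨h0, h1, h2, h3⟩ := mem_shape.mp hu
  by_cases hc1 : q + 1 < f p.toNat
  · exact ⟨(p, q + 1), by simp [mem_nbrs], mem_shape.mpr ⟨h0, h1, by omega, by omega⟩⟩
  by_cases hc2 : 1 ≤ q
  · exact ⟨(p, q - 1), by simp [mem_nbrs], mem_shape.mpr ⟨h0, h1, by omega, by omega⟩⟩
  -- q = 0, f p.toNat = 1, hence p ≥ 1
  have hq0 : q = 0 := by omega
  have hfp : f p.toNat = 1 := by omega
  have hp1 : 1 ≤ p := by
    by_contra hc
    have : p = 0 := by omega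
    subst this
    simp at hfp
    omega
  refine ⟨(p - 1, q), by simp [mem_nbrs], mem_shape.mpr ⟨by omega, by omega, by omega, ?_⟩⟩
  have : (p - 1).toNat = p.toNat - 1 := by omega
  rw [this]
  have := hA (p.toNat - 1) p.toNat (by omega)
  omega

lemma numSingletons_config {w : ℕ} {f : ℕ → ℕ} {s : ℕ}
    (hA : ∀ x y : ℕ, x ≤ y → f y ≤ f x) (hf0 : 2 ≤ f 0) :
    numSingletons (shape w f ∪ sings s) = s := by
  classical
  rw [numSingletons, Finset.filter_union]
  have h1 : (shape w f).filter (fun v => ∀ u ∈ nbrs v, u ∉ shape w f ∪ sings s) = ∅ := by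
    rw [Finset.filter_eq_empty_iff]
    intro u hu hall
    obtain ⟨v, hv1, hv2⟩ := shape_no_single hA hf0 u hu
    exact hall v hv1 (Finset.mem_union_left _ hv2)
  have h2 : (sings s).filter (fun v => ∀ u ∈ nbrs v, u ∉ shape w f ∪ sings s) = sings s := by
    apply Finset.filter_true_of_mem
    intro u hu v hv
    rw [Finset.mem_union]
    have := sep_sings_all (w := w) (f := f) u hu v hv
    tauto
  rw [h1, h2, Finset.empty_union, card_sings]

lemma build (a b s m w h r ε : ℕ) (hr1 : 1 ≤ r) (hrw : r ≤ w) (hh : 1 ≤ h) (hε : ε ≤ 1)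
    (hcells : w * h + r + ε = m) (hmsa : m + s = a)
    (hT2eq : 2 * (w + h + 1 + ε) + 4 * s = b) :
    ∃ A : Finset (ℤ × ℤ), A.card = a ∧ T2 A = b ∧ numSingletons A = s := by
  classical
  set f : ℕ → ℕ := fun x => h + (if x < r then 1 else 0) + (if x = 0 then ε else 0) with hf
  have hw : 1 ≤ w := le_trans hr1 hrw
  have hAnti : ∀ x y : ℕ, x ≤ y → f y ≤ f x := by
    intro x y hxy
    simp only [hf]
    split_ifs <;> omega
  have hpos : ∀ x, x < w → 1 ≤ f x := by
    intro x _
    simp only [hf]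
    split_ifs <;> omega
  have hf0 : f 0 = h + 1 + ε := by simp only [hf]; rw [if_pos (by omega : (0:ℕ) < r)]; simp
  refine ⟨shape w f ∪ sings s, ?_, ?_, ?_⟩
  · rw [Finset.card_union_of_disjoint disj_shape_sings, card_shape, card_sings]
    have hsum : ∑ x ∈ Finset.range w, f x = w * h + r + ε := by
      simp only [hf]
      rw [Finset.sum_add_distrib, Finset.sum_add_distrib]
      have e1 : ∑ _x ∈ Finset.range w, h = w * h := by
        rw [Finset.sum_const, Finset.card_range, smul_eq_mul]
      have e2 : ∑ x ∈ Finset.range w, (if x < r then 1 else 0) = r := by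
        rw [Finset.card_filter _ _ |>.symm]
        have : (Finset.range w).filter (fun x => x < r) = Finset.range r := by
          ext x
          simp only [Finset.mem_filter, Finset.mem_range]
          omega
        rw [this, Finset.card_range]
      have e3 : ∑ x ∈ Finset.range w, (if x = 0 then ε else 0) = ε := by
        rw [Finset.sum_ite_eq' (Finset.range w) 0 (fun _ => ε)]
        rw [if_pos (Finset.mem_range.mpr (by omega))]
      rw [e1, e2, e3]
    rw [hsum]
    omega
  · rw [T2_union _ _ sep_shape_sings (fun u hu v hv => (sep_sings_all u hu v hv).1)
      disj_shape_sings, T2_shape w f hw hAnti hpos, T2_sings, hf0]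
    omega
  · exact numSingletons_config hAnti (by omega)

lemma sq_pred (u : ℕ) (h : 1 ≤ u) : (u - 1) * (u - 1) + 2 * u = u * u + 1 := by
  zify [h]
  ring

lemma mul_pred_nat (u : ℕ) (h : 1 ≤ u) : u * (u - 1) + u = u * u := by
  zify [h]
  ring

lemma factAB (t m : ℕ) (σ : ℝ) (ht1 : (1:ℝ) ≤ (t:ℝ)) (hσ0 : 0 ≤ σ) (hσ2 : σ ^ 2 = (t:ℝ) + 1)
    (hmρ : ((1 + σ) / 2) ^ 2 ≤ (m:ℝ)) (hmρ' : (m:ℝ) - 1 < ((1 + σ) / 2) ^ 2) :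
    2 ≤ m ∧ ((m:ℝ) - Real.sqrt m ≥ (t:ℝ) / 4) ∧
      (((m:ℝ) - 1) - Real.sqrt ((m:ℝ) - 1) < (t:ℝ) / 4) := by
  have hσ1 : 1 < σ := by nlinarith
  have hρ1 : (1:ℝ) < (1 + σ) / 2 := by linarith
  have hρq : ((1 + σ) / 2) ^ 2 - (1 + σ) / 2 = (t : ℝ) / 4 := by nlinarith
  have hsqm : (1 + σ) / 2 ≤ Real.sqrt m := by
    have h1 := Real.sqrt_le_sqrt hmρ
    rwa [Real.sqrt_sq (by linarith : (0:ℝ) ≤ (1 + σ) / 2)] at h1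
  have hx2 : Real.sqrt m ^ 2 = (m : ℝ) := Real.sq_sqrt (by positivity)
  have factA : (m : ℝ) - Real.sqrt m ≥ (t : ℝ) / 4 := by
    nlinarith [hsqm, hx2, hρ1, hρq]
  have hm2 : 2 ≤ m := by
    by_contra hc
    have h1 : (m : ℝ) ≤ 1 := by exact_mod_cast (by omega : m ≤ 1)
    have h2 : (m : ℝ) ≤ Real.sqrt m := by
      nlinarith [hx2, Real.sqrt_nonneg (m : ℝ)]
    linarith
  refine ⟨hm2, factA, ?_⟩
  have hm1R : (0:ℝ) ≤ (m : ℝ) - 1 := by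
    have : (2:ℝ) ≤ m := by exact_mod_cast hm2
    linarith
  have hsqm' : Real.sqrt ((m : ℝ) - 1) < (1 + σ) / 2 := by
    have h1 : Real.sqrt ((m : ℝ) - 1) < Real.sqrt (((1 + σ) / 2) ^ 2) :=
      Real.sqrt_lt_sqrt hm1R hmρ'
    rwa [Real.sqrt_sq (by linarith : (0:ℝ) ≤ (1 + σ) / 2)] at h1
  have hy2 : Real.sqrt ((m : ℝ) - 1) ^ 2 = (m : ℝ) - 1 := Real.sq_sqrt hm1R
  nlinarith [hsqm', hy2, hρ1, hρq, Real.sqrt_nonneg ((m : ℝ) - 1)]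

lemma pick_params (t m : ℕ) (ht1 : 1 ≤ t) (hteven : t % 2 = 0) (hm2 : 2 ≤ m)
    (factA : (m:ℝ) - Real.sqrt m ≥ (t:ℝ) / 4)
    (factB : ((m:ℝ) - 1) - Real.sqrt ((m:ℝ) - 1) < (t:ℝ) / 4) :
    ∃ w h r ε : ℕ, 1 ≤ r ∧ r ≤ w ∧ 1 ≤ h ∧ ε ≤ 1 ∧ w * h + r + ε = m ∧
      4 * m = 2 * (w + h + 1 + ε) + t := by
  have hx2 : Real.sqrt m ^ 2 = (m : ℝ) := Real.sq_sqrt (by positivity)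
  have hx0 : (0:ℝ) ≤ Real.sqrt m := Real.sqrt_nonneg _
  have hm1R : (0:ℝ) ≤ (m : ℝ) - 1 := by
    have : (2:ℝ) ≤ m := by exact_mod_cast hm2
    linarith
  have hy2 : Real.sqrt ((m : ℝ) - 1) ^ 2 = (m : ℝ) - 1 := Real.sq_sqrt hm1R
  have hy0 : (0:ℝ) ≤ Real.sqrt ((m : ℝ) - 1) := Real.sqrt_nonneg _
  obtain ⟨E, hE⟩ : ∃ E, t = 2 * E := ⟨t / 2, by omega⟩
  have hER : (E : ℝ) = (t : ℝ) / 2 := by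
    have : (t : ℝ) = 2 * E := by exact_mod_cast hE
    linarith
  have hEm : E ≤ 2 * m := by
    by_contra hc
    have h1 : (2 * m : ℝ) < E := by exact_mod_cast (by omega : 2 * m < E)
    linarith [factA, hx0]
  obtain ⟨d, hdE⟩ : ∃ d, E + d = 2 * m := ⟨2 * m - E, by omega⟩
  have hdR : (d : ℝ) = 2 * m - (t : ℝ) / 2 := by
    have : (E : ℝ) + d = 2 * m := by exact_mod_cast hdE
    linarith
  have hd_lo : 2 * Real.sqrt m ≤ (d : ℝ) := by rw [hdR]; linarith [factA]
  have hd_hi : (d : ℝ) < 2 + 2 * Real.sqrt ((m : ℝ) - 1) := by rw [hdR]; linarith [factB]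
  have h141 : (1.41 : ℝ) < Real.sqrt m := by
    have h2 : (2:ℝ) ≤ m := by exact_mod_cast hm2
    by_contra hc
    push_neg at hc
    have a1 : Real.sqrt m * Real.sqrt m ≤ (1.41:ℝ) * 1.41 :=
      mul_le_mul hc hc hx0 (by norm_num)
    have a3 : Real.sqrt m * Real.sqrt m = (m:ℝ) := Real.mul_self_sqrt (by positivity)
    linarith [a1, a3]
  have hd3 : 3 ≤ d := by
    by_contra hc
    have h1 : (d : ℝ) ≤ 2 := by exact_mod_cast (by omega : d ≤ 2)
    linarith
  -- final goal reduces to: w + h + 1 + ε = d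
  have hgoal : ∀ w h r ε : ℕ, w + h + 1 + ε = d → w * h + r + ε = m →
      4 * m = 2 * (w + h + 1 + ε) + t := by
    intro w h r ε h1 _
    omega
  rcases Nat.even_or_odd d with hpar | hpar
  · -- d even, d = 2u, u ≥ 2
    obtain ⟨u, hu⟩ : ∃ u, d = 2 * u := by
      obtain ⟨c, hc⟩ := hpar; exact ⟨c, by omega⟩
    have hu2 : 2 ≤ u := by omega
    obtain ⟨U, hU⟩ : ∃ U, u * u = U := ⟨_, rfl⟩
    have hm_hi : m ≤ U := by
      have h1 : Real.sqrt m ≤ (u : ℝ) := by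
        have : (d : ℝ) = 2 * u := by exact_mod_cast hu
        linarith
      have hu0 : (0:ℝ) ≤ (u:ℝ) := by positivity
      have a1 : Real.sqrt m * Real.sqrt m ≤ (u:ℝ) * u :=
        mul_le_mul h1 h1 hx0 hu0
      have a3 : Real.sqrt m * Real.sqrt m = (m:ℝ) := Real.mul_self_sqrt (by positivity)
      have h2 : (m : ℝ) ≤ (u : ℝ) * u := by linarith
      have h3 : (m:ℝ) ≤ ((U:ℕ):ℝ) := by rw [← hU]; push_cast; linarith
      exact_mod_cast h3
    have hm_lo : U + 3 ≤ m + 2 * u := by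
      have h1 : (u : ℝ) - 1 < Real.sqrt ((m : ℝ) - 1) := by
        have : (d : ℝ) = 2 * u := by exact_mod_cast hu
        linarith
      have h15 : (1:ℝ) ≤ (u:ℝ) := by exact_mod_cast (by omega : 1 ≤ u)
      have hnn : (0:ℝ) ≤ (u:ℝ) - 1 := by linarith
      have hypos : 0 < Real.sqrt ((m:ℝ) - 1) := lt_of_le_of_lt hnn h1
      have a1 : ((u:ℝ)-1) * ((u:ℝ)-1) ≤ ((u:ℝ)-1) * Real.sqrt ((m:ℝ)-1) :=
        mul_le_mul_of_nonneg_left h1.le hnn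
      have a2 : ((u:ℝ)-1) * Real.sqrt ((m:ℝ)-1) < Real.sqrt ((m:ℝ)-1) * Real.sqrt ((m:ℝ)-1) :=
        mul_lt_mul_of_pos_right h1 hypos
      have a3 : Real.sqrt ((m:ℝ)-1) * Real.sqrt ((m:ℝ)-1) = (m:ℝ) - 1 := Real.mul_self_sqrt hm1R
      have h2 : ((u:ℝ) - 1) ^ 2 < (m : ℝ) - 1 := by rw [sq]; linarith
      have h3 : U + 3 < m + 2 * u + 1 := by
        have hreal : ((U:ℕ):ℝ) + 3 < (m : ℝ) + 2 * u + 1 := by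
          rw [← hU]; push_cast; linarith [h2]
        exact_mod_cast hreal
      omega
    by_cases hc : U + 1 ≤ m + u
    · -- w = u, h = u - 1, r = m + u - U, ε = 0
      have hwh : u * (u - 1) + u = U := by rw [← hU]; exact mul_pred_nat u (by omega)
      refine ⟨u, u - 1, m + u - U, 0, by omega, by omega, by omega, by omega, by omega,
        hgoal u (u - 1) (m + u - U) 0 (by omega) (by omega)⟩
    · -- w = u - 1, h = u - 1, r = m + 2u - U - 2, ε = 1
      have hwh : (u - 1) * (u - 1) + 2 * u = U + 1 := by rw [← hU]; exact sq_pred u (by omega)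
      refine ⟨u - 1, u - 1, m + 2 * u - U - 2, 1, by omega, by omega, by omega, by omega,
        by omega, hgoal (u - 1) (u - 1) (m + 2 * u - U - 2) 1 (by omega) (by omega)⟩
  · -- d odd, d = 2u + 1, u ≥ 1
    obtain ⟨u, hu⟩ := hpar
    have hu1 : 1 ≤ u := by omega
    obtain ⟨U, hU⟩ : ∃ U, u * u = U := ⟨_, rfl⟩
    have hm_hi : m ≤ U + u := by
      have hdu : (d : ℝ) = 2 * u + 1 := by exact_mod_cast hu
      have h1 : 2 * Real.sqrt m ≤ 2 * (u:ℝ) + 1 := by linarith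
      have hu0 : (0:ℝ) ≤ 2 * (u:ℝ) + 1 := by positivity
      have a1 : (2 * Real.sqrt m) * (2 * Real.sqrt m) ≤ (2 * (u:ℝ) + 1) * (2 * (u:ℝ) + 1) :=
        mul_le_mul h1 h1 (by linarith) hu0
      have a3 : Real.sqrt m * Real.sqrt m = (m:ℝ) := Real.mul_self_sqrt (by positivity)
      have a4 : (2 * Real.sqrt m) * (2 * Real.sqrt m) = 4 * (m:ℝ) := by
        linear_combination (4:ℝ) * a3
      have h2 : 4 * (m : ℝ) ≤ (2 * (u:ℝ) + 1) * (2 * (u:ℝ) + 1) := by linarith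
      have h3 : 4 * m ≤ 4 * U + 4 * u + 1 := by
        have hreal : 4 * (m:ℝ) ≤ 4 * ((U:ℕ):ℝ) + 4 * u + 1 := by
          rw [← hU]; push_cast; linarith [h2]
        exact_mod_cast hreal
      omega
    have hm_lo : U + 2 ≤ m + u := by
      have hdu : (d : ℝ) = 2 * u + 1 := by exact_mod_cast hu
      have h1 : (u : ℝ) - 1 / 2 < Real.sqrt ((m : ℝ) - 1) := by linarith
      have h15 : (1:ℝ) ≤ (u:ℝ) := by exact_mod_cast hu1
      have hnn : (0:ℝ) ≤ (u:ℝ) - 1 / 2 := by linarith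
      have hypos : 0 < Real.sqrt ((m:ℝ) - 1) := lt_of_le_of_lt hnn h1
      have a1 : ((u:ℝ)-1/2) * ((u:ℝ)-1/2) ≤ ((u:ℝ)-1/2) * Real.sqrt ((m:ℝ)-1) :=
        mul_le_mul_of_nonneg_left h1.le hnn
      have a2 : ((u:ℝ)-1/2) * Real.sqrt ((m:ℝ)-1) < Real.sqrt ((m:ℝ)-1) * Real.sqrt ((m:ℝ)-1) :=
        mul_lt_mul_of_pos_right h1 hypos
      have a3 : Real.sqrt ((m:ℝ)-1) * Real.sqrt ((m:ℝ)-1) = (m:ℝ) - 1 := Real.mul_self_sqrt hm1R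
      have h2 : ((u:ℝ) - 1 / 2) ^ 2 < (m : ℝ) - 1 := by rw [sq]; linarith
      have h3 : 4 * U + 5 < 4 * m + 4 * u := by
        have hreal : 4 * ((U:ℕ):ℝ) + 5 < 4 * (m:ℝ) + 4 * (u:ℝ) := by
          rw [← hU]; push_cast; linarith [h2]
        exact_mod_cast hreal
      omega
    by_cases hc : U + 1 ≤ m
    · -- w = u, h = u, r = m - U, ε = 0
      refine ⟨u, u, m - U, 0, by omega, by omega, by omega, by omega, by omega,
        hgoal u u (m - U) 0 (by omega) (by omega)⟩
    · -- w = u, h = u - 1, r = m + u - U - 1, ε = 1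
      have hwh : u * (u - 1) + u = U := by rw [← hU]; exact mul_pred_nat u (by omega)
      refine ⟨u, u - 1, m + u - U - 1, 1, by omega, by omega, by omega, by omega, by omega,
        hgoal u (u - 1) (m + u - U - 1) 1 (by omega) (by omega)⟩

/-- Among all configurations with sufficient statistics `T₁ = a` and `T₂ = b`,
the maximal possible number of singleton components is
`s = ⌊(b/2 − 1 − √(4a − b + 1))/2⌋`. -/
theorem max_singletons_two_dim (a b : ℕ) (ha : 1 ≤ a) (hb : Even b)
    (hab : (b : ℤ) < 4 * (a : ℤ))
    (hne : ∃ A : Finset (ℤ × ℤ), A.card = a ∧ T2 A = b) :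
    (∀ A : Finset (ℤ × ℤ), A.card = a → T2 A = b →
      (numSingletons A : ℤ) ≤
        ⌊((b : ℝ) / 2 - 1 - Real.sqrt (4 * (a : ℝ) - (b : ℝ) + 1)) / 2⌋) ∧
    (∃ A : Finset (ℤ × ℤ), A.card = a ∧ T2 A = b ∧
      (numSingletons A : ℤ) =
        ⌊((b : ℝ) / 2 - 1 - Real.sqrt (4 * (a : ℝ) - (b : ℝ) + 1)) / 2⌋) := by
  constructor
  · exact fun A h1 h2 => upper_bound a b hab A h1 h2
  -- existence part
  set X : ℝ := ((b : ℝ) / 2 - 1 - Real.sqrt (4 * (a : ℝ) - (b : ℝ) + 1)) / 2 with hX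
  have hsZ0 : 0 ≤ ⌊X⌋ := by
    obtain ⟨A₀, h1, h2⟩ := hne
    have := upper_bound a b hab A₀ h1 h2
    rw [← hX] at this
    have h0 : (0 : ℤ) ≤ (numSingletons A₀ : ℤ) := by positivity
    omega
  set s : ℕ := ⌊X⌋.toNat with hs
  have hsX : (s : ℝ) ≤ X := by
    have h1 : ((s : ℤ) : ℝ) ≤ X := by
      rw [hs, Int.toNat_of_nonneg hsZ0]
      exact Int.floor_le X
    exact_mod_cast h1
  have hXs : X < (s : ℝ) + 1 := by
    have h1 : X < ((s : ℤ) : ℝ) + 1 := by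
      rw [hs, Int.toNat_of_nonneg hsZ0]
      exact Int.lt_floor_add_one X
    exact_mod_cast h1
  -- basic real quantities
  have hba : b + 1 ≤ 4 * a := by
    have : (b : ℤ) + 1 ≤ 4 * a := by omega
    exact_mod_cast this
  set t : ℕ := 4 * a - b with ht
  have htR : (t : ℝ) = 4 * (a : ℝ) - b := by
    rw [ht]; push_cast [Nat.cast_sub (by omega : b ≤ 4 * a)]; ring
  have ht1 : 1 ≤ t := by omega
  set σ : ℝ := Real.sqrt (4 * (a : ℝ) - (b : ℝ) + 1) with hσ
  have hσ0 : 0 ≤ σ := Real.sqrt_nonneg _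
  have hσ2 : σ ^ 2 = (t : ℝ) + 1 := by
    rw [hσ, Real.sq_sqrt (by rw [← htR] at *; positivity ), htR]
  -- a - X = ((1+σ)/2)²
  have haX2 : (a : ℝ) - X = ((1 + σ) / 2) ^ 2 := by
    rw [hX]
    linear_combination (-(1:ℝ)/4) * hσ2 - (1/4) * htR
  have hsa : s ≤ a := by
    by_contra hc
    have h1 : (a : ℝ) + 1 ≤ s := by exact_mod_cast (by omega : a + 1 ≤ s)
    linarith [sq_nonneg ((1 + σ) / 2), haX2, hsX]
  set m : ℕ := a - s with hm
  have hmsa : m + s = a := by omega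
  have hmR : (m : ℝ) = a - s := by
    rw [hm]; push_cast [Nat.cast_sub hsa]; ring
  have hmρ : ((1 + σ) / 2) ^ 2 ≤ (m : ℝ) := by linarith [hsX, haX2, hmR]
  have hmρ' : (m : ℝ) - 1 < ((1 + σ) / 2) ^ 2 := by linarith [hXs, haX2, hmR]
  obtain ⟨hm2, factA, factB⟩ := factAB t m σ (by exact_mod_cast ht1) hσ0 hσ2 hmρ hmρ'
  have hteven : t % 2 = 0 := by
    obtain ⟨c, hc⟩ := hb
    omega
  obtain ⟨w, h, r, ε, hr1, hrw, hh, hε, hcells, heq⟩ :=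
    pick_params t m ht1 hteven hm2 factA factB
  have hT2eq : 2 * (w + h + 1 + ε) + 4 * s = b := by omega
  obtain ⟨A, hA1, hA2, hA3⟩ := build a b s m w h r ε hr1 hrw hh hε hcells hmsa hT2eq
  refine ⟨A, hA1, hA2, ?_⟩
  rw [hA3, hs]
  exact Int.toNat_of_nonneg hsZ0
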